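/- Let S be a nonempty finite set, C a positive integer, P : S → ℝ a probability mass function on S (P[x] ≥ 0, Σ_{x∈S} P[x] = 1), and for each x ∈ S let p_x ∈ ℝ^C be a probability vector with all entries positive. Let q^α = Σ_{x∈S} P[x] p_x^α. Then for every α > 0, the function α ↦ H(q^α) is differentiable at α and its derivative equals −(1/α) · Σ_{x∈S} P[x] · Cov(p_x^α, q^α). -/

import Mathlib

/-- Power transform of a probability vector: `p^α[j] = p[j]^α / ∑ i, p[i]^α`. -/
noncomputable def powT {C : ℕ} (p : Fin C → ℝ) (α : ℝ) : Fin C → ℝ :=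
  fun j => p j ^ α / ∑ i, p i ^ α

/-- Shannon entropy `H(P) = −∑ j, P[j] ln P[j]`. -/
noncomputable def ent {C : ℕ} (P : Fin C → ℝ) : ℝ := -∑ j, P j * Real.log (P j)

/-- `m1(P) = ∑ j, P[j] (−ln P[j])`. -/
noncomputable def m1 {C : ℕ} (P : Fin C → ℝ) : ℝ := ∑ j, P j * (-Real.log (P j))

/-- `Cov(P,Q) = ∑ j, P[j] (−ln P[j] − m1(P)) (−ln Q[j] − ∑ i, P[i] (−ln Q[i]))`. -/
noncomputable def cov {C : ℕ} (P Q : Fin C → ℝ) : ℝ :=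
  ∑ j, P j * (-Real.log (P j) - m1 P) *
    (-Real.log (Q j) - ∑ i, P i * (-Real.log (Q i)))

section Aux

variable {C : ℕ}

lemma Z_pos (hC : 0 < C) (p : Fin C → ℝ) (hp : ∀ j, 0 < p j) (a : ℝ) :
    0 < ∑ i, p i ^ a := by
  have : Nonempty (Fin C) := ⟨⟨0, hC⟩⟩
  exact Finset.sum_pos (fun i _ => Real.rpow_pos_of_pos (hp i) a) Finset.univ_nonempty

lemma powT_pos (hC : 0 < C) (p : Fin C → ℝ) (hp : ∀ j, 0 < p j) (a : ℝ) (j : Fin C) :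
    0 < powT p a j :=
  div_pos (Real.rpow_pos_of_pos (hp j) a) (Z_pos hC p hp a)

lemma powT_sum (hC : 0 < C) (p : Fin C → ℝ) (hp : ∀ j, 0 < p j) (a : ℝ) :
    ∑ j, powT p a j = 1 := by
  unfold powT
  rw [← Finset.sum_div]
  exact div_self (Z_pos hC p hp a).ne'

lemma key_zero (hC : 0 < C) (p : Fin C → ℝ) (hp : ∀ j, 0 < p j) (a : ℝ) :
    ∑ j, powT p a j * (-Real.log (powT p a j) - m1 (powT p a)) = 0 := by
  have h1 : ∑ j, powT p a j * (-Real.log (powT p a j) - m1 (powT p a))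
      = (∑ j, powT p a j * (-Real.log (powT p a j)))
        - (∑ j, powT p a j) * m1 (powT p a) := by
    rw [Finset.sum_mul, ← Finset.sum_sub_distrib]
    exact Finset.sum_congr rfl fun j _ => by ring
  rw [h1, powT_sum hC p hp a, m1, one_mul, sub_self]

lemma cov_eq (P Q : Fin C → ℝ)
    (h : ∑ j, P j * (-Real.log (P j) - m1 P) = 0) :
    cov P Q = ∑ j, P j * (-Real.log (P j) - m1 P) * (-Real.log (Q j)) := by
  unfold cov
  have h1 : ∑ j, P j * (-Real.log (P j) - m1 P) *
      (-Real.log (Q j) - ∑ i, P i * (-Real.log (Q i)))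
      = (∑ j, P j * (-Real.log (P j) - m1 P) * (-Real.log (Q j)))
        - (∑ j, P j * (-Real.log (P j) - m1 P)) * (∑ i, P i * (-Real.log (Q i))) := by
    rw [Finset.sum_mul, ← Finset.sum_sub_distrib]
    exact Finset.sum_congr rfl fun j _ => by ring
  rw [h1, h, zero_mul, sub_zero]

lemma log_powT (hC : 0 < C) (p : Fin C → ℝ) (hp : ∀ j, 0 < p j) (a : ℝ) (j : Fin C) :
    Real.log (powT p a j) = a * Real.log (p j) - Real.log (∑ i, p i ^ a) := by
  unfold powT
  rw [Real.log_div (Real.rpow_pos_of_pos (hp j) a).ne' (Z_pos hC p hp a).ne',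
    Real.log_rpow (hp j)]

lemma m1_powT (hC : 0 < C) (p : Fin C → ℝ) (hp : ∀ j, 0 < p j) (a : ℝ) :
    m1 (powT p a) = Real.log (∑ i, p i ^ a)
      - a * (∑ i, p i ^ a * Real.log (p i)) / (∑ i, p i ^ a) := by
  have hZ := Z_pos hC p hp a
  unfold m1
  have h1 : ∀ j : Fin C, powT p a j * (-Real.log (powT p a j))
      = (p j ^ a * Real.log (∑ i, p i ^ a) - a * (p j ^ a * Real.log (p j)))
          / (∑ i, p i ^ a) := by
    intro j
    rw [log_powT hC p hp a j]
    unfold powT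
    field_simp
    ring
  rw [Finset.sum_congr rfl fun j _ => h1 j, ← Finset.sum_div, Finset.sum_sub_distrib,
    ← Finset.sum_mul, ← Finset.mul_sum]
  field_simp

lemma hasDerivAt_powT (hC : 0 < C) (p : Fin C → ℝ) (hp : ∀ j, 0 < p j)
    {α : ℝ} (hα : 0 < α) (j : Fin C) :
    HasDerivAt (fun a => powT p a j)
      (-(1 / α) * powT p α j * (-Real.log (powT p α j) - m1 (powT p α))) α := by
  have hZ := Z_pos hC p hp α
  have hN : HasDerivAt (fun a => p j ^ a) (p j ^ α * Real.log (p j)) α :=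
    (Real.hasStrictDerivAt_const_rpow (hp j) α).hasDerivAt
  have hD : HasDerivAt (fun a => ∑ i, p i ^ a) (∑ i, p i ^ α * Real.log (p i)) α :=
    HasDerivAt.fun_sum fun i _ => (Real.hasStrictDerivAt_const_rpow (hp i) α).hasDerivAt
  have hdiv := hN.div hD hZ.ne'
  have heq : -(1 / α) * powT p α j * (-Real.log (powT p α j) - m1 (powT p α))
      = (p j ^ α * Real.log (p j) * (∑ i, p i ^ α)
          - p j ^ α * ∑ i, p i ^ α * Real.log (p i)) / (∑ i, p i ^ α) ^ 2 := by
    rw [log_powT hC p hp α j, m1_powT hC p hp α]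
    unfold powT
    field_simp
    ring
  rw [heq]
  exact hdiv

end Aux

/-- with `q^α = ∑ x, P[x] p_x^α`, for every `α > 0` the map
`α ↦ H(q^α)` is differentiable at `α` with derivative
`−(1/α) · ∑ x, P[x] · Cov(p_x^α, q^α)`. -/
theorem stmt4 {S : Type*} [Fintype S] [Nonempty S] {C : ℕ} (hC : 0 < C)
    (P : S → ℝ) (hP : ∀ x, 0 ≤ P x) (hPsum : ∑ x, P x = 1)
    (p : S → Fin C → ℝ) (hp : ∀ x j, 0 < p x j) (hpsum : ∀ x, ∑ j, p x j = 1) :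
    ∀ α : ℝ, 0 < α →
      HasDerivAt (fun a : ℝ => ent (fun j => ∑ x, P x * powT (p x) a j))
        (-(1 / α) *
          ∑ x, P x * cov (powT (p x) α) (fun j => ∑ x', P x' * powT (p x') α j)) α := by
  intro α hα
  obtain ⟨x₀, hx₀⟩ : ∃ x : S, 0 < P x := by
    by_contra h
    push_neg at h
    have : (∑ x, P x) = 0 :=
      Finset.sum_eq_zero fun x _ => le_antisymm (h x) (hP x)
    rw [hPsum] at this
    exact one_ne_zero this
  set f : S → Fin C → ℝ := fun x => powT (p x) α with hf
  set q : Fin C → ℝ := fun j => ∑ x, P x * f x j with hqdef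
  have hqpos : ∀ j, 0 < q j := by
    intro j
    exact Finset.sum_pos'
      (fun x _ => mul_nonneg (hP x) (powT_pos hC (p x) (hp x) α j).le)
      ⟨x₀, Finset.mem_univ _, mul_pos hx₀ (powT_pos hC (p x₀) (hp x₀) α j)⟩
  set dd : S → Fin C → ℝ :=
    fun x j => -(1 / α) * f x j * (-Real.log (f x j) - m1 (f x)) with hdd
  set d : Fin C → ℝ := fun j => ∑ x, P x * dd x j with hd
  have hgj : ∀ j, HasDerivAt (fun a : ℝ => ∑ x, P x * powT (p x) a j) (d j) α :=
    fun j => HasDerivAt.fun_sum fun x _ =>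
      (hasDerivAt_powT hC (p x) (hp x) hα j).const_mul (P x)
  have hent : HasDerivAt (fun a : ℝ => ent (fun j => ∑ x, P x * powT (p x) a j))
      (-(∑ j, (d j * Real.log (q j) + q j * ((q j)⁻¹ * d j)))) α := by
    simp only [ent]
    apply HasDerivAt.neg
    apply HasDerivAt.fun_sum
    intro j _
    exact (hgj j).mul (by have h := (Real.hasDerivAt_log (hqpos j).ne').comp α (hgj j); exact h)
  convert hent using 1
  -- algebra
  have hsimp : ∀ j, q j * ((q j)⁻¹ * d j) = d j :=
    fun j => mul_inv_cancel_left₀ (hqpos j).ne' (d j)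
  have hdd_sum : ∀ x : S, ∑ j, dd x j = 0 := by
    intro x
    have := key_zero hC (p x) (hp x) α
    simp only [hdd]
    rw [← Finset.sum_neg_distrib] at *
    calc ∑ j, -(1 / α) * f x j * (-Real.log (f x j) - m1 (f x))
        = -(1/α) * ∑ j, f x j * (-Real.log (f x j) - m1 (f x)) := by
          rw [Finset.mul_sum]; exact Finset.sum_congr rfl fun j _ => by ring
      _ = 0 := by rw [key_zero hC (p x) (hp x) α, mul_zero]
  have hcov : ∀ x : S, cov (f x) q
      = ∑ j, f x j * (-Real.log (f x j) - m1 (f x)) * (-Real.log (q j)) :=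
    fun x => cov_eq (f x) q (key_zero hC (p x) (hp x) α)
  have hdd_log : ∀ x : S, ∑ j, dd x j * Real.log (q j) = (1 / α) * cov (f x) q := by
    intro x
    rw [hcov x, Finset.mul_sum]
    refine Finset.sum_congr rfl fun j _ => ?_
    simp only [hdd]
    ring
  calc -(1 / α) * ∑ x, P x * cov (f x) q
      = ∑ x, -(P x * ((1 / α) * cov (f x) q)) := by
        rw [Finset.mul_sum]; exact Finset.sum_congr rfl fun x _ => by ring
    _ = -∑ x, P x * ((1 / α) * cov (f x) q) := by
        rw [← Finset.sum_neg_distrib]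
    _ = -∑ x, P x * (∑ j, dd x j * Real.log (q j) + ∑ j, dd x j) := by
        refine congrArg Neg.neg (Finset.sum_congr rfl fun x _ => ?_)
        rw [hdd_log x, hdd_sum x, add_zero]
    _ = -∑ x, ∑ j, (P x * (dd x j * Real.log (q j)) + P x * dd x j) := by
        refine congrArg Neg.neg (Finset.sum_congr rfl fun x _ => ?_)
        rw [mul_add, Finset.mul_sum, Finset.mul_sum, ← Finset.sum_add_distrib]
    _ = -∑ j, ∑ x, (P x * (dd x j * Real.log (q j)) + P x * dd x j) := by
        rw [Finset.sum_comm]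
    _ = -∑ j, (d j * Real.log (q j) + q j * ((q j)⁻¹ * d j)) := by
        refine congrArg Neg.neg (Finset.sum_congr rfl fun j _ => ?_)
        rw [hsimp j, Finset.sum_add_distrib]
        have h1 : ∑ x, P x * (dd x j * Real.log (q j)) = d j * Real.log (q j) := by
          simp only [hd]; rw [Finset.sum_mul]
          exact Finset.sum_congr rfl fun x _ => by ring
        rw [h1]
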